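/- Let u be inner with u(0) = 0. For any inner functions α and γ, the subspace conj(z)·conj(K_α) ⊕ γ·u·H^2 is a D_u-invariant closed subspace of K_u^⊥. -/

import Mathlib

open MeasureTheory Complex AddCircle

noncomputable section

namespace Paper

/-- The period `2π`. -/
abbrev T : ℝ := 2 * Real.pi

instance : Fact (0 < T) := ⟨by positivity⟩

/-- Normalized Lebesgue (Haar) measure on the circle. -/
abbrev μ : Measure (AddCircle T) := haarAddCircle

/-- The space `L²(𝕋, dm)`. -/
abbrev L2 : Type := Lp ℂ 2 μ

lemma memLp_mul {u : AddCircle T → ℂ} (hm : AEStronglyMeasurable u μ)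
    (hb : ∀ᵐ x ∂μ, ‖u x‖ ≤ 1) (f : L2) :
    MemLp (fun x => u x * (f : AddCircle T → ℂ) x) 2 μ := by
  refine (Lp.memLp f).of_le (hm.mul (Lp.aestronglyMeasurable f)) ?_
  filter_upwards [hb] with x hx
  calc ‖u x * (f : AddCircle T → ℂ) x‖ = ‖u x‖ * ‖(f : AddCircle T → ℂ) x‖ := norm_mul _ _
    _ ≤ 1 * ‖(f : AddCircle T → ℂ) x‖ := by gcongr
    _ = ‖(f : AddCircle T → ℂ) x‖ := one_mul _

/-- Multiplication by a measurable function bounded by `1`, as a bounded operator on `L²`. -/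
def mulCLM (u : AddCircle T → ℂ) (hm : AEStronglyMeasurable u μ)
    (hb : ∀ᵐ x ∂μ, ‖u x‖ ≤ 1) : L2 →L[ℂ] L2 :=
  LinearMap.mkContinuous
    { toFun := fun f => (memLp_mul hm hb f).toLp _
      map_add' := fun f g => by
        show MemLp.toLp _ (memLp_mul hm hb (f + g)) = _
        have h : (fun x => u x * ((f + g : L2) : AddCircle T → ℂ) x)
            =ᵐ[μ] (fun x => u x * (f : AddCircle T → ℂ) x)
              + (fun x => u x * (g : AddCircle T → ℂ) x) := by
          filter_upwards [Lp.coeFn_add f g] with x hx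
          simp only [Pi.add_apply, hx, mul_add]
        rw [MemLp.toLp_congr (memLp_mul hm hb (f + g))
          ((memLp_mul hm hb f).add (memLp_mul hm hb g)) h, MemLp.toLp_add]
      map_smul' := fun c f => by
        have h : (fun x => u x * ((c • f : L2) : AddCircle T → ℂ) x)
            =ᵐ[μ] c • (fun x => u x * (f : AddCircle T → ℂ) x) := by
          filter_upwards [Lp.coeFn_smul c f] with x hx
          simp only [Pi.smul_apply, hx, smul_eq_mul]
          ring
        simp only [RingHom.id_apply]
        rw [MemLp.toLp_congr (memLp_mul hm hb (c • f))
          ((memLp_mul hm hb f).const_smul c) h, MemLp.toLp_const_smul] }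
    1
    (fun f => by
      simp only [LinearMap.coe_mk, AddHom.coe_mk, one_mul]
      rw [Lp.norm_toLp]
      have h1 : eLpNorm (fun x => u x * (f : AddCircle T → ℂ) x) 2 μ
          ≤ eLpNorm (f : AddCircle T → ℂ) 2 μ := by
        refine eLpNorm_mono_ae ?_
        filter_upwards [hb] with x hx
        calc ‖u x * (f : AddCircle T → ℂ) x‖
            = ‖u x‖ * ‖(f : AddCircle T → ℂ) x‖ := norm_mul _ _
          _ ≤ 1 * ‖(f : AddCircle T → ℂ) x‖ := by gcongr
          _ = ‖(f : AddCircle T → ℂ) x‖ := one_mul _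
      calc (eLpNorm (fun x => u x * (f : AddCircle T → ℂ) x) 2 μ).toReal
          ≤ (eLpNorm (f : AddCircle T → ℂ) 2 μ).toReal :=
            ENNReal.toReal_mono (Lp.eLpNorm_ne_top f) h1
        _ = ‖f‖ := (Lp.norm_def f).symm)

lemma memLp_conj (f : L2) :
    MemLp (fun x => (starRingEnd ℂ) ((f : AddCircle T → ℂ) x)) 2 μ := by
  refine (Lp.memLp f).of_le ?_ ?_
  · exact Complex.continuous_conj.comp_aestronglyMeasurable (Lp.aestronglyMeasurable f)
  · filter_upwards with x
    simp

/-- Complex conjugation on `L²`. -/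
def conjL2 (f : L2) : L2 := (memLp_conj f).toLp _

/-- The independent variable `z = e^{iθ}` as a function on the circle. -/
def zfun : AddCircle T → ℂ := fun x => fourier 1 x

lemma zfun_meas : AEStronglyMeasurable zfun μ :=
  ((map_continuous (fourier (T := T) 1)).aestronglyMeasurable)

lemma zfun_norm : ∀ᵐ x ∂μ, ‖zfun x‖ ≤ 1 := by
  filter_upwards with x
  simp [zfun, Circle.norm_coe]

/-- Multiplication by `z` (the bilateral shift `M` on `L²`). -/
def Mz : L2 →L[ℂ] L2 := mulCLM zfun zfun_meas zfun_norm

/-- Multiplication by `conj z`. -/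
def Mzbar : L2 →L[ℂ] L2 :=
  mulCLM (fun x => (starRingEnd ℂ) (zfun x))
    (Complex.continuous_conj.comp_aestronglyMeasurable zfun_meas)
    (by filter_upwards with x; simp [zfun, Circle.norm_coe])

/-- The Hardy space `H² = {f ∈ L² : f̂(n) = 0 for all n < 0}`. -/
def H2 : Submodule ℂ L2 where
  carrier := {f | ∀ n : ℤ, n < 0 → fourierBasis.repr f n = 0}
  add_mem' := by
    intro f g hf hg n hn
    simp [map_add, hf n hn, hg n hn]
  zero_mem' := by intro n hn; simp
  smul_mem' := by
    intro c f hf n hn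
    simp [_root_.map_smul, hf n hn]

lemma continuous_coeff (n : ℤ) :
    Continuous fun f : L2 => fourierBasis.repr f n := by
  rw [Metric.continuous_iff]
  intro f ε hε
  refine ⟨ε, hε, fun g hg => ?_⟩
  have h1 : fourierBasis.repr g n - fourierBasis.repr f n = fourierBasis.repr (g - f) n := by
    simp [map_sub]
  have h2 : ‖fourierBasis.repr (g - f) n‖ ≤ ‖fourierBasis.repr (g - f)‖ :=
    lp.norm_apply_le_norm (by norm_num) _ n
  have h3 : ‖fourierBasis.repr (g - f)‖ = ‖g - f‖ :=
    fourierBasis.repr.norm_map _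
  calc dist (fourierBasis.repr g n) (fourierBasis.repr f n)
      = ‖fourierBasis.repr (g - f) n‖ := by rw [dist_eq_norm, h1]
    _ ≤ ‖g - f‖ := by rw [← h3]; exact h2
    _ = dist g f := (dist_eq_norm g f).symm
    _ < ε := hg

lemma H2_isClosed : IsClosed (H2 : Set L2) := by
  have : (H2 : Set L2) =
      ⋂ n ∈ {m : ℤ | m < 0}, {f : L2 | fourierBasis.repr f n = 0} := by
    ext f
    simp only [Set.mem_iInter, Set.mem_setOf_eq]
    rfl
  rw [this]
  exact isClosed_biInter fun n _ => isClosed_eq (continuous_coeff n) continuous_const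

instance : CompleteSpace H2 := H2_isClosed.completeSpace_coe

/-- The Riesz projection `P⁺` of `L²` onto `H²`. -/
def Pp : L2 →L[ℂ] L2 := H2.subtypeL ∘L Submodule.orthogonalProjectionOnto H2

/-- The projection `P⁻ = I − P⁺` of `L²` onto `conj(H²₀)`. -/
def Pm : L2 →L[ℂ] L2 := ContinuousLinearMap.id ℂ L2 - Pp

/-- `conj(H²₀) = {f ∈ L² : f̂(n) = 0 for all n ≥ 0}`, the orthogonal complement of `H²`. -/
def Hm : Submodule ℂ L2 where
  carrier := {f | ∀ n : ℤ, 0 ≤ n → fourierBasis.repr f n = 0}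
  add_mem' := by
    intro f g hf hg n hn
    simp [map_add, hf n hn, hg n hn]
  zero_mem' := by intro n hn; simp
  smul_mem' := by
    intro c f hf n hn
    simp [_root_.map_smul, hf n hn]

/-- The constant function `1` as an element of `L²`. -/
def oneL2 : L2 := (memLp_const (1 : ℂ)).toLp _

/-- An inner function: a bounded measurable unimodular function on the circle whose
negative Fourier coefficients vanish. -/
structure InnerData where
  u : AddCircle T → ℂ
  meas : AEStronglyMeasurable u μ
  unim : ∀ᵐ x ∂μ, ‖u x‖ = 1
  anal : ∀ n : ℤ, n < 0 → fourierCoeff u n = 0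

namespace InnerData

variable (U : InnerData)

lemma bd : ∀ᵐ x ∂μ, ‖U.u x‖ ≤ 1 := by
  filter_upwards [U.unim] with x hx
  rw [hx]

/-- Multiplication by `u`: the operator `M_u` on `L²`. -/
def M : L2 →L[ℂ] L2 := mulCLM U.u U.meas U.bd

/-- Multiplication by `conj u`: the operator `M_{conj u}` on `L²`. -/
def Mc : L2 →L[ℂ] L2 :=
  mulCLM (fun x => (starRingEnd ℂ) (U.u x))
    (Complex.continuous_conj.comp_aestronglyMeasurable U.meas)
    (by filter_upwards [U.bd] with x hx; simpa using hx)

/-- `u` as an element of `L²`. -/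
def toL2 : L2 :=
  (memLp_top_of_bound U.meas 1 U.bd |>.mono_exponent le_top).toLp _

/-- The value `u(0)` of (the analytic extension of) `u` at the origin, i.e. the mean of `u`. -/
def a0 : ℂ := fourierCoeff U.u 0

/-- The subspace `uH²`. -/
def uH2 : Submodule ℂ L2 := Submodule.map (U.M : L2 →ₗ[ℂ] L2) H2

/-- The model space `K_u = H² ∩ (uH²)ᗮ`. -/
def Ku : Submodule ℂ L2 := H2 ⊓ (U.uH2)ᗮ

lemma Ku_isClosed : IsClosed (U.Ku : Set L2) := by
  have : (U.Ku : Set L2) = (H2 : Set L2) ∩ ((U.uH2)ᗮ : Set L2) := rfl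
  rw [this]
  exact H2_isClosed.inter (U.uH2).isClosed_orthogonal

instance : CompleteSpace U.Ku := U.Ku_isClosed.completeSpace_coe

/-- `K_u^⊥`, the orthogonal complement of the model space in `L²`. -/
def KP : Submodule ℂ L2 := (U.Ku)ᗮ

instance : CompleteSpace U.KP := (U.Ku).isClosed_orthogonal.completeSpace_coe

/-- The orthogonal projection `P_u : L² → K_u` (viewed as an operator on `L²`). -/
def Pu : L2 →L[ℂ] L2 := (U.Ku).subtypeL ∘L Submodule.orthogonalProjectionOnto U.Ku

/-- The dual of the compressed shift: `D_u = (I − P_u) M_z |_{K_u^⊥}`. -/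
def Du : U.KP →L[ℂ] U.KP :=
  Submodule.orthogonalProjectionOnto U.KP ∘L Mz ∘L (U.KP).subtypeL

/-- The conjugation `C_u f = u · conj(z f)` on `L²`. -/
def C (f : L2) : L2 := U.M (conjL2 (Mz f))

/-- The reproducing kernel of `K_u` at `0`: `k₀ᵘ = 1 − conj(u(0))·u`. -/
def k0 : L2 := oneL2 - (starRingEnd ℂ) U.a0 • U.toL2

/-- The similarity `V_u = P⁻ + (conj u/conj u(0)) P⁺` of the paper. -/
def V : L2 →L[ℂ] L2 := Pm + ((starRingEnd ℂ) U.a0)⁻¹ • (U.Mc ∘L Pp)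

/-- The inverse similarity `V_u⁻¹ = P⁻ + conj(u(0)) u P⁺`. -/
def Vinv : L2 →L[ℂ] L2 := Pm + (starRingEnd ℂ) U.a0 • (U.M ∘L Pp)

end InnerData

lemma Mz_mem_H2 {f : L2} (hf : f ∈ H2) : Mz f ∈ H2 := by
  intro n hn
  rw [fourierBasis_repr]
  have hcoe : (Mz f : AddCircle T → ℂ) =ᵐ[μ] fun x => zfun x * (f : AddCircle T → ℂ) x :=
    MemLp.coeFn_toLp (memLp_mul zfun_meas zfun_norm f)
  have h1 : fourierCoeff (Mz f : AddCircle T → ℂ) n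
      = fourierCoeff (f : AddCircle T → ℂ) (n - 1) := by
    unfold fourierCoeff
    rw [integral_congr_ae (by filter_upwards [hcoe] with x hx; rw [hx])]
    refine integral_congr_ae ?_
    filter_upwards with x
    have : fourier (-n) x * zfun x = fourier (-(n - 1)) x := by
      unfold zfun
      rw [show (-(n - 1) : ℤ) = -n + 1 by ring, fourier_add]
    simp only [smul_eq_mul]
    calc fourier (-n) x * (zfun x * (f : AddCircle T → ℂ) x)
        = (fourier (-n) x * zfun x) * (f : AddCircle T → ℂ) x := by ring
      _ = fourier (-(n - 1)) x * (f : AddCircle T → ℂ) x := by rw [this]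
  rw [h1]
  have := hf (n - 1) (by omega)
  rwa [fourierBasis_repr] at this

/-- The unilateral shift `S` on `H²`. -/
def Shift : H2 →L[ℂ] H2 :=
  (Mz ∘L H2.subtypeL).codRestrict H2 (fun x => Mz_mem_H2 x.2)


/-! `conj(z)·conj(K_α)` lies in `conj(H²₀)` and `γuH²` in `uH²`, so the two summands are orthogonal
closed subspaces, both orthogonal to `K_u`; hence their sum is closed and lies in `K_u^⊥`.
For `f = conj(z k) + γ u h` one has `z f = conj(k(0)) + conj(z k₁) + γ u (z h)` with
`k₁ = (k - k(0))/z ∈ K_α`. Since `u(0) = 0` the constant `conj(k(0))` lies in `K_u`, so the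
projection onto `K_u^⊥` removes it: `D_u f = conj(z k₁) + γ u (z h)`. -/

open scoped ComplexConjugate InnerProductSpace

theorem _root_.Submodule.isClosed_sup_of_le_orthogonal {𝕜 E : Type*} [RCLike 𝕜]
    [NormedAddCommGroup E] [InnerProductSpace 𝕜 E] {K L : Submodule 𝕜 E}
    [K.HasOrthogonalProjection] (hL : IsClosed (L : Set E)) (hLK : L ≤ Kᗮ) :
    IsClosed ((K ⊔ L : Submodule 𝕜 E) : Set E) := by
  have hsup : ((K ⊔ L : Submodule 𝕜 E) : Set E) = Kᗮ.starProjection ⁻¹' L := by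
    ext x
    refine ⟨fun hx => ?_, fun hx => ?_⟩
    · obtain ⟨a, ha, b, hb, rfl⟩ := Submodule.mem_sup.mp hx
      rwa [Set.mem_preimage, map_add, Submodule.starProjection_orthogonal_apply_eq_zero ha,
        Submodule.starProjection_eq_self_iff.mpr (hLK hb), zero_add]
    · exact Submodule.mem_sup.mpr ⟨_, K.starProjection_apply_mem x, _, hx,
        K.starProjection_add_starProjection_orthogonal x⟩
  rw [hsup]
  exact hL.preimage (ContinuousLinearMap.continuous _)

theorem _root_.LinearIsometry.isClosed_map {R R₂ E F : Type*} [Semiring R] [Semiring R₂]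
    {σ : R →+* R₂} [RingHomSurjective σ] [NormedAddCommGroup E] [NormedAddCommGroup F]
    [CompleteSpace E] [Module R E] [Module R₂ F] (f : E →ₛₗᵢ[σ] F) {K : Submodule R E}
    (hK : IsClosed (K : Set E)) : IsClosed (K.map f.toLinearMap : Set F) := by
  rw [Submodule.map_coe]
  exact f.isometry.isClosedEmbedding.isClosedMap _ hK

lemma mem_H2_iff {f : L2} : f ∈ H2 ↔ ∀ n : ℤ, n < 0 → fourierCoeff (⇑f) n = 0 := by
  simp only [H2, Submodule.mem_mk, AddSubmonoid.mem_mk, AddSubsemigroup.mem_mk,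
    Set.mem_ofPred_eq, fourierBasis_repr]

lemma mem_Hm_iff {f : L2} : f ∈ Hm ↔ ∀ n : ℤ, 0 ≤ n → fourierCoeff (⇑f) n = 0 := by
  simp only [Hm, Submodule.mem_mk, AddSubmonoid.mem_mk, AddSubsemigroup.mem_mk,
    Set.mem_ofPred_eq, fourierBasis_repr]

lemma mulCLM_coeFn (u : AddCircle T → ℂ) (hm : AEStronglyMeasurable u μ)
    (hb : ∀ᵐ x ∂μ, ‖u x‖ ≤ 1) (f : L2) :
    ⇑(mulCLM u hm hb f) =ᵐ[μ] fun x => u x * f x :=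
  MemLp.coeFn_toLp (memLp_mul hm hb f)

lemma conjL2_coeFn (f : L2) : ⇑(conjL2 f) =ᵐ[μ] fun x => conj (f x) :=
  MemLp.coeFn_toLp _

lemma oneL2_coeFn : ⇑oneL2 =ᵐ[μ] fun _ => (1 : ℂ) :=
  MemLp.coeFn_toLp _

lemma Mz_coeFn (f : L2) : ⇑(Mz f) =ᵐ[μ] fun x => zfun x * f x :=
  mulCLM_coeFn _ _ _ f

lemma Mzbar_coeFn (f : L2) : ⇑(Mzbar f) =ᵐ[μ] fun x => conj (zfun x) * f x :=
  mulCLM_coeFn _ _ _ f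

lemma zfun_mul_conj (x : AddCircle T) : zfun x * conj (zfun x) = 1 := by
  rw [zfun, ← fourier_neg, ← fourier_add, add_neg_cancel, fourier_zero]

lemma zfun_unimodular : ∀ᵐ x ∂μ, ‖zfun x‖ = 1 := by
  filter_upwards with x
  simp [zfun, Circle.norm_coe]

lemma fourierCoeff_fourier_mul (k : ℤ) (g : AddCircle T → ℂ) (n : ℤ) :
    fourierCoeff (fun x => fourier k x * g x) n = fourierCoeff g (n - k) := by
  refine integral_congr_ae (Filter.Eventually.of_forall fun x => ?_)
  simp only [smul_eq_mul]
  rw [← mul_assoc, ← fourier_add, neg_sub, sub_eq_neg_add]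

lemma fourierCoeff_conj (g : AddCircle T → ℂ) (n : ℤ) :
    fourierCoeff (fun x => conj (g x)) n = conj (fourierCoeff g (-n)) := by
  unfold fourierCoeff
  rw [← integral_conj]
  refine integral_congr_ae (Filter.Eventually.of_forall fun x => ?_)
  simp only [smul_eq_mul, map_mul, neg_neg, ← fourier_neg]

lemma fourierCoeff_oneL2 : fourierCoeff ⇑oneL2 = Pi.single 0 1 := by
  rw [fourierCoeff_congr_ae oneL2_coeFn, ← fourierCoeff_fourier (T := T) 0]
  congr 1
  ext x
  exact fourier_zero.symm

lemma fourierCoeff_Mz (f : L2) (n : ℤ) :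
    fourierCoeff ⇑(Mz f) n = fourierCoeff ⇑f (n - 1) := by
  rw [fourierCoeff_congr_ae (Mz_coeFn f)]
  exact fourierCoeff_fourier_mul 1 _ n

lemma fourierCoeff_Mzbar (f : L2) (n : ℤ) :
    fourierCoeff ⇑(Mzbar f) n = fourierCoeff ⇑f (n + 1) := by
  rw [fourierCoeff_congr_ae (Mzbar_coeFn f), ← sub_neg_eq_add,
    ← fourierCoeff_fourier_mul (-1)]
  simp only [zfun, fourier_neg]

lemma fourierCoeff_conjL2 (f : L2) (n : ℤ) :
    fourierCoeff ⇑(conjL2 f) n = conj (fourierCoeff ⇑f (-n)) := by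
  rw [fourierCoeff_congr_ae (conjL2_coeFn f)]
  exact fourierCoeff_conj _ n

theorem inner_eq_tsum_fourierCoeff (f g : L2) :
    ⟪f, g⟫_ℂ = ∑' n : ℤ, conj (fourierCoeff ⇑f n) * fourierCoeff ⇑g n := by
  rw [← fourierBasis.repr.inner_map_map f g, lp.inner_eq_tsum]
  congr 1
  ext n
  rw [RCLike.inner_apply, fourierBasis_repr, fourierBasis_repr, mul_comm]

theorem fourierCoeff_mul_eq_tsum {u : AddCircle T → ℂ} (hu : MemLp u 2 μ) (f : L2) (n : ℤ) :
    fourierCoeff (fun x => u x * f x) n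
      = ∑' m : ℤ, fourierCoeff u (n - m) * fourierCoeff ⇑f m := by
  -- the `n`-th coefficient of `u f` is the inner product of `f` with `conj (e_{-n} u) ∈ L²`
  have hw : MemLp (fun x => conj (fourier (-n) x * u x)) 2 μ :=
    hu.of_le (Complex.continuous_conj.comp_aestronglyMeasurable
      ((map_continuous _).aestronglyMeasurable.mul hu.1))
      (Filter.Eventually.of_forall fun x => by simp [Circle.norm_coe])
  have h_inner : ⟪hw.toLp _, f⟫_ℂ = fourierCoeff (fun x => u x * f x) n := by
    rw [MeasureTheory.L2.inner_def]
    refine integral_congr_ae ?_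
    filter_upwards [hw.coeFn_toLp] with x hx
    rw [RCLike.inner_apply, hx, smul_eq_mul, Complex.conj_conj]
    ring
  have h_coeff (m : ℤ) : fourierCoeff ⇑(hw.toLp _) m = conj (fourierCoeff u (n - m)) := by
    rw [fourierCoeff_congr_ae hw.coeFn_toLp, fourierCoeff_conj, fourierCoeff_fourier_mul,
      neg_sub_neg]
  rw [← h_inner, inner_eq_tsum_fourierCoeff]
  simp only [h_coeff, Complex.conj_conj]

lemma inner_oneL2_right (f : L2) : ⟪f, oneL2⟫_ℂ = conj (fourierCoeff ⇑f 0) := by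
  rw [inner_eq_tsum_fourierCoeff, tsum_eq_single 0 fun n hn => by
    rw [fourierCoeff_oneL2, Pi.single_eq_of_ne hn, mul_zero]]
  rw [fourierCoeff_oneL2, Pi.single_eq_same, mul_one]

lemma oneL2_mem_H2 : oneL2 ∈ H2 :=
  mem_H2_iff.mpr fun n hn => by rw [fourierCoeff_oneL2, Pi.single_eq_of_ne hn.ne]

lemma inner_eq_zero_of_mem_Hm_of_mem_H2 {f g : L2} (hf : f ∈ Hm) (hg : g ∈ H2) :
    ⟪f, g⟫_ℂ = 0 := by
  rw [inner_eq_tsum_fourierCoeff]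
  refine (tsum_congr fun n => ?_).trans tsum_zero
  rcases le_or_gt 0 n with hn | hn
  · rw [mem_Hm_iff.mp hf n hn, map_zero, zero_mul]
  · rw [mem_H2_iff.mp hg n hn, mul_zero]

lemma Mzbar_mem_H2 {g : L2} (hg : g ∈ H2) (hg0 : fourierCoeff ⇑g 0 = 0) : Mzbar g ∈ H2 :=
  mem_H2_iff.mpr fun n hn => by
    rw [fourierCoeff_Mzbar]
    rcases (show n + 1 ≤ 0 by omega).eq_or_lt with h | h
    · rwa [h]
    · exact mem_H2_iff.mp hg _ h

lemma inner_Mzbar (f g : L2) : ⟪f, Mzbar g⟫_ℂ = ⟪Mz f, g⟫_ℂ := by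
  rw [MeasureTheory.L2.inner_def, MeasureTheory.L2.inner_def]
  refine integral_congr_ae ?_
  filter_upwards [Mzbar_coeFn g, Mz_coeFn f] with x hg hf
  rw [RCLike.inner_apply, RCLike.inner_apply, hg, hf, map_mul]
  ring

lemma Mz_Mzbar (f : L2) : Mz (Mzbar f) = f := by
  refine Lp.ext ?_
  filter_upwards [Mz_coeFn (Mzbar f), Mzbar_coeFn f] with x h₁ h₂
  rw [h₁, h₂, ← mul_assoc, zfun_mul_conj, one_mul]

lemma Mz_conjL2_Mz (f : L2) : Mz (conjL2 (Mz f)) = conjL2 f := by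
  refine Lp.ext ?_
  filter_upwards [Mz_coeFn (conjL2 (Mz f)), conjL2_coeFn (Mz f), Mz_coeFn f,
    conjL2_coeFn f] with x h₁ h₂ h₃ h₄
  rw [h₁, h₂, h₃, h₄, map_mul, ← mul_assoc, zfun_mul_conj, one_mul]

lemma conjL2_oneL2 : conjL2 oneL2 = oneL2 := by
  refine Lp.ext ?_
  filter_upwards [conjL2_coeFn oneL2, oneL2_coeFn] with x h₁ h₂
  rw [h₁, h₂, map_one]

lemma conjL2_add (f g : L2) : conjL2 (f + g) = conjL2 f + conjL2 g := by
  refine Lp.ext ?_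
  filter_upwards [conjL2_coeFn (f + g), Lp.coeFn_add f g, Lp.coeFn_add (conjL2 f) (conjL2 g),
    conjL2_coeFn f, conjL2_coeFn g] with x h₁ h₂ h₃ h₄ h₅
  rw [h₁, h₂, h₃, Pi.add_apply, Pi.add_apply, h₄, h₅, map_add]

lemma conjL2_smul (c : ℂ) (f : L2) : conjL2 (c • f) = conj c • conjL2 f := by
  refine Lp.ext ?_
  filter_upwards [conjL2_coeFn (c • f), Lp.coeFn_smul c f, Lp.coeFn_smul (conj c) (conjL2 f),
    conjL2_coeFn f] with x h₁ h₂ h₃ h₄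
  rw [h₁, h₂, h₃, Pi.smul_apply, Pi.smul_apply, h₄, smul_eq_mul, smul_eq_mul, map_mul]

lemma norm_conjL2 (f : L2) : ‖conjL2 f‖ = ‖f‖ := by
  rw [Lp.norm_def, Lp.norm_def, eLpNorm_congr_norm_ae (g := ⇑f)]
  filter_upwards [conjL2_coeFn f] with x hx
  rw [hx, Complex.norm_conj]

lemma norm_mulCLM_of_unimodular {u : AddCircle T → ℂ} (hm : AEStronglyMeasurable u μ)
    (hu : ∀ᵐ x ∂μ, ‖u x‖ = 1) (hb : ∀ᵐ x ∂μ, ‖u x‖ ≤ 1) (f : L2) :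
    ‖mulCLM u hm hb f‖ = ‖f‖ := by
  rw [Lp.norm_def, Lp.norm_def, eLpNorm_congr_norm_ae (g := ⇑f)]
  filter_upwards [mulCLM_coeFn u hm hb f, hu] with x hx hux
  rw [hx, norm_mul, hux, one_mul]

lemma mulCLM_comm {u v : AddCircle T → ℂ} (hmu : AEStronglyMeasurable u μ)
    (hbu : ∀ᵐ x ∂μ, ‖u x‖ ≤ 1) (hmv : AEStronglyMeasurable v μ)
    (hbv : ∀ᵐ x ∂μ, ‖v x‖ ≤ 1) (f : L2) :
    mulCLM u hmu hbu (mulCLM v hmv hbv f) = mulCLM v hmv hbv (mulCLM u hmu hbu f) := by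
  refine Lp.ext ?_
  filter_upwards [mulCLM_coeFn u hmu hbu (mulCLM v hmv hbv f), mulCLM_coeFn v hmv hbv f,
    mulCLM_coeFn v hmv hbv (mulCLM u hmu hbu f), mulCLM_coeFn u hmu hbu f] with x h₁ h₂ h₃ h₄
  rw [h₁, h₂, h₃, h₄, mul_left_comm]

def conjL2ₗᵢ : L2 →ₗᵢ⋆[ℂ] L2 where
  toFun := conjL2
  map_add' := conjL2_add
  map_smul' := conjL2_smul
  norm_map' := norm_conjL2

def Mzₗᵢ : L2 →ₗᵢ[ℂ] L2 :=
  { (Mz : L2 →ₗ[ℂ] L2) with norm_map' := norm_mulCLM_of_unimodular _ zfun_unimodular _ }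

namespace InnerData

variable (V : InnerData)

def Mₗᵢ : L2 →ₗᵢ[ℂ] L2 :=
  { (V.M : L2 →ₗ[ℂ] L2) with norm_map' := norm_mulCLM_of_unimodular _ V.unim _ }

lemma M_comm (W : InnerData) (f : L2) : V.M (W.M f) = W.M (V.M f) :=
  mulCLM_comm _ _ _ _ f

lemma M_Mz_comm (f : L2) : V.M (Mz f) = Mz (V.M f) :=
  mulCLM_comm _ _ _ _ f

lemma M_coeFn (f : L2) : ⇑(V.M f) =ᵐ[μ] fun x => V.u x * f x :=
  mulCLM_coeFn _ _ _ f

lemma fourierCoeff_M (f : L2) (n : ℤ) :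
    fourierCoeff ⇑(V.M f) n = ∑' m : ℤ, fourierCoeff V.u (n - m) * fourierCoeff ⇑f m := by
  rw [fourierCoeff_congr_ae (V.M_coeFn f)]
  exact fourierCoeff_mul_eq_tsum ((memLp_top_of_bound V.meas 1 V.bd).mono_exponent le_top) f n

lemma M_mem_H2 {f : L2} (hf : f ∈ H2) : V.M f ∈ H2 :=
  mem_H2_iff.mpr fun n hn => by
    rw [fourierCoeff_M]
    refine (tsum_congr fun m => ?_).trans tsum_zero
    rcases lt_or_ge m 0 with hm | hm
    · rw [mem_H2_iff.mp hf m hm, mul_zero]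
    · rw [V.anal (n - m) (by omega), zero_mul]

lemma fourierCoeff_M_zero {g : L2} (hg : g ∈ H2) :
    fourierCoeff ⇑(V.M g) 0 = V.a0 * fourierCoeff ⇑g 0 := by
  rw [fourierCoeff_M, tsum_eq_single 0 fun m hm => ?_, sub_zero, a0]
  rcases hm.lt_or_gt with hm | hm
  · rw [mem_H2_iff.mp hg m hm, mul_zero]
  · rw [V.anal (0 - m) (by omega), zero_mul]

lemma uH2_le_H2 : V.uH2 ≤ H2 := by
  rintro _ ⟨f, hf, rfl⟩
  exact V.M_mem_H2 hf

lemma one_mem_Ku (h0 : V.a0 = 0) : oneL2 ∈ V.Ku := by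
  refine ⟨oneL2_mem_H2, (Submodule.mem_orthogonal _ _).mpr ?_⟩
  rintro _ ⟨w, hw, rfl⟩
  show ⟪V.M w, oneL2⟫_ℂ = 0
  rw [inner_oneL2_right, V.fourierCoeff_M_zero hw, h0, zero_mul, map_zero]

end InnerData

def backwardShift (k : L2) : L2 := Mzbar (k - fourierCoeff (⇑k) 0 • oneL2)

lemma Mz_backwardShift (k : L2) :
    Mz (backwardShift k) = k - fourierCoeff (⇑k) 0 • oneL2 :=
  Mz_Mzbar _

lemma fourierCoeff_sub_smul_oneL2_zero (k : L2) (c : ℂ) :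
    fourierCoeff ⇑(k - c • oneL2) 0 = fourierCoeff ⇑k 0 - c := by
  rw [← fourierBasis_repr, map_sub, map_smul, lp.coeFn_sub, lp.coeFn_smul, Pi.sub_apply,
    Pi.smul_apply, fourierBasis_repr, fourierBasis_repr, fourierCoeff_oneL2, Pi.single_eq_same,
    smul_eq_mul, mul_one]

lemma InnerData.backwardShift_mem_Ku (A : InnerData) {k : L2} (hk : k ∈ A.Ku) :
    backwardShift k ∈ A.Ku := by
  set c := fourierCoeff (⇑k) 0
  have hg : k - c • oneL2 ∈ H2 := sub_mem hk.1 (H2.smul_mem c oneL2_mem_H2)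
  have hg0 : fourierCoeff ⇑(k - c • oneL2) 0 = 0 := by
    rw [fourierCoeff_sub_smul_oneL2_zero, sub_self]
  refine ⟨Mzbar_mem_H2 hg hg0, (Submodule.mem_orthogonal _ _).mpr ?_⟩
  rintro _ ⟨w, hw, rfl⟩
  have hzw : Mz w ∈ H2 := Mz_mem_H2 hw
  have hzw0 : fourierCoeff ⇑(Mz w) 0 = 0 := by
    rw [fourierCoeff_Mz]
    exact mem_H2_iff.mp hw _ (by norm_num)
  calc ⟪A.M w, backwardShift k⟫_ℂ
      = ⟪A.M (Mz w), k⟫_ℂ - c * ⟪A.M (Mz w), oneL2⟫_ℂ := by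
        rw [backwardShift, inner_Mzbar, ← A.M_Mz_comm, inner_sub_right, inner_smul_right]
    _ = 0 := by
        have hk2 : ⟪A.M (Mz w), k⟫_ℂ = 0 := (Submodule.mem_orthogonal _ _).mp hk.2 _ ⟨_, hzw, rfl⟩
        rw [hk2, inner_oneL2_right,
          A.fourierCoeff_M_zero hzw, hzw0, mul_zero, map_zero, mul_zero, sub_zero]

namespace InnerData

/-- `conj(z)·conj(K_α)`. -/
def conjShiftKu (A : InnerData) : Submodule ℂ L2 :=
  A.Ku.map (conjL2ₗᵢ.comp Mzₗᵢ).toLinearMap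

/-- `γ u H²`. -/
def prodMulH2 (G U : InnerData) : Submodule ℂ L2 :=
  H2.map (G.Mₗᵢ.comp U.Mₗᵢ).toLinearMap

variable (A G U : InnerData)

lemma mem_conjShiftKu {f : L2} : f ∈ A.conjShiftKu ↔ ∃ k ∈ A.Ku, conjL2 (Mz k) = f :=
  Iff.rfl

lemma mem_prodMulH2 {f : L2} : f ∈ G.prodMulH2 U ↔ ∃ h ∈ H2, G.M (U.M h) = f :=
  Iff.rfl

lemma isClosed_conjShiftKu : IsClosed (A.conjShiftKu : Set L2) :=
  LinearIsometry.isClosed_map _ A.Ku_isClosed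

lemma isClosed_prodMulH2 : IsClosed (G.prodMulH2 U : Set L2) :=
  LinearIsometry.isClosed_map _ H2_isClosed

lemma conjShiftKu_le_Hm : A.conjShiftKu ≤ Hm := by
  rintro _ ⟨k, hk, rfl⟩
  refine mem_Hm_iff.mpr fun n hn => ?_
  show fourierCoeff ⇑(conjL2 (Mz k)) n = 0
  rw [fourierCoeff_conjL2, fourierCoeff_Mz, mem_H2_iff.mp hk.1 _ (by omega), map_zero]

lemma prodMulH2_le_uH2 : G.prodMulH2 U ≤ U.uH2 := by
  rintro _ ⟨h, hh, rfl⟩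
  exact ⟨G.M h, G.M_mem_H2 hh, U.M_comm G h⟩

lemma prodMulH2_le_orthogonal_conjShiftKu : G.prodMulH2 U ≤ (A.conjShiftKu)ᗮ :=
  fun _ hb => (Submodule.mem_orthogonal _ _).mpr fun _ ha =>
    inner_eq_zero_of_mem_Hm_of_mem_H2 (A.conjShiftKu_le_Hm ha) (U.uH2_le_H2 (G.prodMulH2_le_uH2 U hb))

lemma isClosed_conjShiftKu_sup_prodMulH2 :
    IsClosed ((A.conjShiftKu ⊔ G.prodMulH2 U : Submodule ℂ L2) : Set L2) :=
  have : CompleteSpace A.conjShiftKu := A.isClosed_conjShiftKu.completeSpace_coe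
  Submodule.isClosed_sup_of_le_orthogonal (G.isClosed_prodMulH2 U)
    (A.prodMulH2_le_orthogonal_conjShiftKu G U)

lemma conjShiftKu_sup_prodMulH2_le_KP : A.conjShiftKu ⊔ G.prodMulH2 U ≤ U.KP := by
  refine sup_le (fun x hx => ?_) (fun x hx => ?_) <;>
    refine (Submodule.mem_orthogonal' _ _).mpr fun y hy => ?_
  · exact inner_eq_zero_of_mem_Hm_of_mem_H2 (A.conjShiftKu_le_Hm hx) hy.1
  · exact (Submodule.mem_orthogonal _ _).mp hy.2 x (G.prodMulH2_le_uH2 U hx)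

lemma coe_conjShiftKu_sup_prodMulH2 :
    ((A.conjShiftKu ⊔ G.prodMulH2 U : Submodule ℂ L2) : Set L2)
      = {x : L2 | ∃ k ∈ A.Ku, ∃ h ∈ H2, x = conjL2 (Mz k) + G.M (U.M h)} := by
  ext x
  simp only [SetLike.mem_coe, Submodule.mem_sup, mem_conjShiftKu, mem_prodMulH2]
  constructor
  · rintro ⟨_, ⟨k, hk, rfl⟩, _, ⟨h, hh, rfl⟩, rfl⟩
    exact ⟨k, hk, h, hh, rfl⟩
  · rintro ⟨k, hk, h, hh, rfl⟩
    exact ⟨_, ⟨k, hk, rfl⟩, _, ⟨h, hh, rfl⟩, rfl⟩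

lemma Mz_conjL2_Mz_add_M_M (k h : L2) :
    Mz (conjL2 (Mz k) + G.M (U.M h))
      = conj (fourierCoeff (⇑k) 0) • oneL2
        + (conjL2 (Mz (backwardShift k)) + G.M (U.M (Mz h))) := by
  rw [map_add, Mz_conjL2_Mz, Mz_backwardShift, U.M_Mz_comm, G.M_Mz_comm, ← add_assoc]
  congr 1
  rw [sub_eq_add_neg, conjL2_add, ← neg_smul, conjL2_smul, conjL2_oneL2, map_neg, neg_smul]
  abel

lemma Du_mem_conjShiftKu_sup_prodMulH2 (h0 : U.a0 = 0) {f : L2} (hf : f ∈ U.KP)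
    (hfS : f ∈ A.conjShiftKu ⊔ G.prodMulH2 U) :
    (U.Du ⟨f, hf⟩ : L2) ∈ A.conjShiftKu ⊔ G.prodMulH2 U := by
  obtain ⟨_, ⟨k, hk, rfl⟩, _, ⟨h, hh, rfl⟩, rfl⟩ := Submodule.mem_sup.mp hfS
  have hrest : conjL2 (Mz (backwardShift k)) + G.M (U.M (Mz h))
      ∈ A.conjShiftKu ⊔ G.prodMulH2 U :=
    add_mem (Submodule.mem_sup_left ⟨_, A.backwardShift_mem_Ku hk, rfl⟩)
      (Submodule.mem_sup_right ⟨_, Mz_mem_H2 hh, rfl⟩)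
  -- `D_u` discards the constant term, which lies in `K_u` because `u(0) = 0`
  have hconst : conj (fourierCoeff (⇑k) 0) • oneL2 ∈ U.KPᗮ :=
    U.Ku.le_orthogonal_orthogonal (U.Ku.smul_mem _ (U.one_mem_Ku h0))
  have hDu : (U.Du ⟨_, hf⟩ : L2) = conjL2 (Mz (backwardShift k)) + G.M (U.M (Mz h)) :=
    Submodule.eq_starProjection_of_mem_orthogonal'
      (A.conjShiftKu_sup_prodMulH2_le_KP G U hrest) hconst
      ((G.Mz_conjL2_Mz_add_M_M U k h).trans (add_comm _ _))
  exact hDu ▸ hrest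

end InnerData

/-- If `u(0) = 0` then for any inner `α`, `γ` the subspace
`conj(z)conj(K_α) ⊕ γ u H²` is a `D_u`-invariant closed subspace of `K_u^⊥`. -/
theorem invariant_direct_sum (U : InnerData) (h0 : U.a0 = 0) (A G : InnerData) :
    ∃ Ssub : Submodule ℂ L2,
      ((Ssub : Set L2)
          = {x : L2 | ∃ k ∈ A.Ku, ∃ h ∈ H2, x = conjL2 (Mz k) + G.M (U.M h)}) ∧
      IsClosed (Ssub : Set L2) ∧ Ssub ≤ U.KP ∧
      (∀ f : L2, ∀ hf : f ∈ U.KP, f ∈ Ssub → ((U.Du ⟨f, hf⟩ : U.KP) : L2) ∈ Ssub) :=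
  ⟨A.conjShiftKu ⊔ G.prodMulH2 U, A.coe_conjShiftKu_sup_prodMulH2 G U,
    A.isClosed_conjShiftKu_sup_prodMulH2 G U, A.conjShiftKu_sup_prodMulH2_le_KP G U,
    fun _ hf hfS => A.Du_mem_conjShiftKu_sup_prodMulH2 G U h0 hf hfS⟩

end Paper
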